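/- arXiv:1309.0888 — 2 statements merged into one kernel-verified Lean document; each statement's English description precedes it below -/
import Mathlib

section
/- For every integer n ≥ 2, the graph G_{3n}^{2n−1} (the (2n−1)th power of G_{3n}) is not chromatic-choosable; consequently, for every integer k ≥ 2 there exists a graph G such that G^{2k−1} is not chromatic-choosable. -/
open SimpleGraph

/-- The `k`th power of a graph `G`: two distinct vertices are adjacent iff their
distance in `G` is (finite and) at most `k`. -/
def SimpleGraph.power {V : Type*} (G : SimpleGraph V) (k : ℕ) : SimpleGraph V where
  Adj u v := u ≠ v ∧ G.Reachable u v ∧ G.dist u v ≤ k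
  symm := by
    constructor
    rintro u v ⟨h1, h2, h3⟩
    exact ⟨h1.symm, h2.symm, by rwa [SimpleGraph.dist_comm]⟩
  loopless := by
    constructor
    rintro v ⟨h1, -, -⟩
    exact h1 rfl

/-- `G` admits a proper coloring from the lists `L`. -/
def SimpleGraph.Choosable {V : Type*} (G : SimpleGraph V) (L : V → Finset ℕ) : Prop :=
  ∃ φ : V → ℕ, (∀ v, φ v ∈ L v) ∧ ∀ u v, G.Adj u v → φ u ≠ φ v

/-- The list chromatic number of `G`: the least `t` such that `G` is colorable from
any assignment of lists of size at least `t`. -/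
noncomputable def SimpleGraph.listChromaticNumber {V : Type*} (G : SimpleGraph V) : ℕ :=
  sInf {t : ℕ | ∀ L : V → Finset ℕ, (∀ v, t ≤ (L v).card) → G.Choosable L}

/-- The lexicographic product of two graphs. -/
def SimpleGraph.lexProd {V W : Type*} (G : SimpleGraph V) (H : SimpleGraph W) :
    SimpleGraph (V × W) where
  Adj a b := G.Adj a.1 b.1 ∨ (a.1 = b.1 ∧ H.Adj a.2 b.2)
  symm := by
    constructor
    rintro a b (h | ⟨h1, h2⟩)
    · exact Or.inl h.symm
    · exact Or.inr ⟨h1.symm, h2.symm⟩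
  loopless := by
    constructor
    rintro a (h | ⟨-, h2⟩)
    · exact G.loopless.irrefl _ h
    · exact H.loopless.irrefl _ h2

/-- Vertex set `Γ_m`: the vectors in `ℤ_3^m` whose coordinates sum to zero. -/
def GammaVert (m : ℕ) : Type := {z : Fin m → ZMod 3 // ∑ i, z i = 0}

/-- The generator `x_{i,j}`: `1` in coordinate `i`, `2` in coordinate `j`, `0` elsewhere. -/
def xvec (m : ℕ) (i j : Fin m) : Fin m → ZMod 3 :=
  fun l => if l = i then 1 else if l = j then 2 else 0

/-- The Cayley graph `G_m` on `Γ_m` with connection set `X_m = {x_{i,j} : i ≠ j}`. -/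
def Gm (m : ℕ) : SimpleGraph (GammaVert m) where
  Adj y z := ∃ i j : Fin m, i ≠ j ∧ y.1 - z.1 = xvec m i j
  symm := by
    constructor
    rintro y z ⟨i, j, hij, h⟩
    refine ⟨j, i, hij.symm, ?_⟩
    have h' : z.1 - y.1 = -(y.1 - z.1) := by ring
    rw [h', h]
    funext l
    simp only [xvec, Pi.neg_apply]
    by_cases h1 : l = i
    · subst h1
      simp only [if_pos rfl, if_neg hij]
      decide
    · by_cases h2 : l = j
      · subst h2
        simp only [if_pos rfl, if_neg h1]
        decide
      · simp only [if_neg h1, if_neg h2]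
        decide
  loopless := by
    constructor
    rintro y ⟨i, j, hij, h⟩
    have := congrFun h i
    simp [xvec] at this

/-!
Write `w d = ∑ l, (d l).val` for `d ∈ ℤ₃^m`. Every generator `x_{i,j}` has weight `3` and `w` is
subadditive, while a greedy choice of generators (pair a `1` with a `2`, or two `1`s, in `d`) shows
`3 * dist u v = max (w (u - v)) (w (v - u))`. For `m = 3n` this is at most `6n - 3` unless `u - v`
is a nonzero constant vector, where it is `6n`. So `G_{3n}^{2n-1}` is the complete multipartite
graph whose `N ≥ 2` parts are the cosets of the constant vectors, each of size `3`. Its chromatic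
number is `N`, yet it cannot be coloured from the lists `{0, …, N} \ {s}`, where `s ∈ {0, 1, 2}` is
the first coordinate of the vertex: a part coloured with a single colour must use one of the
`N - 2` colours above `2`, and every other part needs two colours, too many for `N + 1` colours.
-/

open Finset Function

theorem Finset.sum_card_le_card_of_pairwise_disjoint {ι α : Type*} [Fintype ι]
    {t : ι → Finset α} {s : Finset α} (hdisj : Pairwise (Disjoint on t)) (hsub : ∀ i, t i ⊆ s) :
    ∑ i, (t i).card ≤ s.card := by
  classical
  rw [← card_biUnion fun i _ j _ hij => hdisj hij]
  exact card_le_card (biUnion_subset.2 fun i _ => hsub i)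

namespace SimpleGraph

variable {V C : Type*} {G : SimpleGraph V} {π : V → C}

theorem chromaticNumber_eq_card_of_adj_iff [Fintype C] (hπ : Surjective π)
    (hadj : ∀ u v, G.Adj u v ↔ π u ≠ π v) : G.chromaticNumber = Fintype.card C := by
  rw [← chromaticNumber_top (V := C)]
  refine le_antisymm (chromaticNumber_mono_of_hom ⟨π, fun h => (hadj _ _).1 h⟩) ?_
  exact chromaticNumber_mono_of_hom ⟨surjInv hπ, fun h => (hadj _ _).2 <| by
    simpa [surjInv_eq hπ] using h⟩

theorem listChromaticNumber_ne_of_not_choosable {t : ℕ} (ht : t ≠ 0) {L : V → Finset ℕ}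
    (hL : ∀ v, t ≤ (L v).card) (hG : ¬ G.Choosable L) : G.listChromaticNumber ≠ t := by
  intro h
  have hne : {t : ℕ | ∀ L : V → Finset ℕ, (∀ v, t ≤ (L v).card) → G.Choosable L}.Nonempty := by
    by_contra hempty
    rw [listChromaticNumber, Set.not_nonempty_iff_eq_empty.1 hempty, Nat.sInf_empty] at h
    exact ht h.symm
  have hmem := Nat.sInf_mem hne
  rw [← listChromaticNumber, h] at hmem
  exact hG (hmem L hL)

theorem not_choosable_of_adj [Fintype C] (σ : V → ZMod 3) (hσ : ∀ c s, ∃ v, π v = c ∧ σ v = s)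
    (hadj : ∀ u v, π u ≠ π v → G.Adj u v) (hN : 2 ≤ Fintype.card C) :
    ¬ G.Choosable fun v => (range (Fintype.card C + 1)).erase (σ v).val := by
  classical
  rintro ⟨φ, hφL, hφ⟩
  set N := Fintype.card C
  let Φ : C → Finset ℕ := fun c => (range (N + 1)).filter fun x => ∃ v, π v = c ∧ φ v = x
  let E := Ico 3 (N + 1)
  have mem_Φ : ∀ v, φ v ∈ Φ (π v) := fun v =>
    mem_filter.2 ⟨mem_of_mem_erase (hφL v), v, rfl, rfl⟩
  have hdisj : Pairwise (Disjoint on Φ) := by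
    intro c c' hcc'
    refine Finset.disjoint_left.2 fun x hx hx' => ?_
    obtain ⟨u, rfl, rfl⟩ := (mem_filter.1 hx).2
    obtain ⟨v, rfl, hvu⟩ := (mem_filter.1 hx').2
    exact hφ _ _ (hadj u v hcc') hvu.symm
  have hpart : ∀ c, 2 ≤ (Φ c).card + (Φ c ∩ E).card := by
    intro c
    obtain ⟨w, rfl, -⟩ := hσ c 0
    by_cases hwE : φ w ∈ E
    · have h1 := card_pos.2 ⟨_, mem_Φ w⟩
      have h2 := card_pos.2 ⟨_, mem_inter.2 ⟨mem_Φ w, hwE⟩⟩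
      omega
    · have hw3 : φ w < 3 := by
        have := mem_range.1 (mem_of_mem_erase (hφL w))
        simp only [E, mem_Ico, not_and, not_lt] at hwE
        omega
      obtain ⟨v, hv, hσv⟩ := hσ (π w) (φ w : ZMod 3)
      have hvw : φ v ≠ φ w := by
        have := ne_of_mem_erase (hφL v)
        rwa [hσv, ZMod.val_cast_of_lt hw3] at this
      have := one_lt_card.2 ⟨_, hv ▸ mem_Φ v, _, mem_Φ w, hvw⟩
      omega
  have hΦ := sum_card_le_card_of_pairwise_disjoint hdisj
    (s := range (N + 1)) fun c => filter_subset _ _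
  have hΦE := sum_card_le_card_of_pairwise_disjoint (t := fun c => Φ c ∩ E) (s := E)
    (fun c c' h => (hdisj h).mono inter_subset_left inter_subset_left)
    fun c => inter_subset_right
  have := sum_le_sum fun c (_ : c ∈ univ) => hpart c
  rw [sum_add_distrib, sum_const, card_univ, smul_eq_mul] at this
  have hE : E.card = N + 1 - 3 := Nat.card_Ico 3 (N + 1)
  rw [card_range] at hΦ
  omega

end SimpleGraph

namespace Gm

variable {m : ℕ} {i j : Fin m}

theorem xvec_apply_left : xvec m i j i = 1 := if_pos rfl

theorem xvec_apply_right (hij : i ≠ j) : xvec m i j j = 2 := by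
  simp [xvec, hij.symm]

theorem xvec_apply_of_ne {l : Fin m} (hi : l ≠ i) (hj : l ≠ j) : xvec m i j l = 0 := by
  simp [xvec, hi, hj]

theorem sum_xvec (hij : i ≠ j) : ∑ l, xvec m i j l = 0 := by
  rw [Fintype.sum_eq_add i j hij fun l hl => xvec_apply_of_ne hl.1 hl.2, xvec_apply_left,
    xvec_apply_right hij]
  decide

theorem neg_xvec (hij : i ≠ j) : -xvec m i j = xvec m j i := by
  funext l
  by_cases hi : l = i
  · subst hi
    rw [Pi.neg_apply, xvec_apply_left, xvec_apply_right hij.symm]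
    decide
  by_cases hj : l = j
  · subst hj
    rw [Pi.neg_apply, xvec_apply_left, xvec_apply_right hij]
    decide
  rw [Pi.neg_apply, xvec_apply_of_ne hi hj, xvec_apply_of_ne hj hi, neg_zero]

theorem neg_sub_xvec (hij : i ≠ j) (d : Fin m → ZMod 3) :
    -(d - xvec m i j) = -d - xvec m j i := by
  rw [← neg_xvec hij]
  abel

def weight (d : Fin m → ZMod 3) : ℕ := ∑ l, (d l).val

theorem weight_add_le (d e : Fin m → ZMod 3) : weight (d + e) ≤ weight d + weight e := by
  rw [weight, weight, weight, ← sum_add_distrib]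
  exact sum_le_sum fun l _ => ZMod.val_add_le _ _

theorem weight_xvec (hij : i ≠ j) : weight (xvec m i j) = 3 := by
  rw [weight, Fintype.sum_eq_add i j hij fun l hl => by rw [xvec_apply_of_ne hl.1 hl.2]; rfl,
    xvec_apply_left, xvec_apply_right hij]
  rfl

theorem three_dvd_weight {d : Fin m → ZMod 3} (hsum : ∑ l, d l = 0) : 3 ∣ weight d := by
  rw [← ZMod.natCast_eq_zero_iff, weight]
  push_cast
  simpa only [ZMod.natCast_zmod_val] using hsum

theorem weight_sub_xvec (hij : i ≠ j) (d : Fin m → ZMod 3) :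
    (weight (d - xvec m i j) : ℤ) =
      weight d + (((d i - 1).val : ℤ) - (d i).val) + (((d j - 2).val : ℤ) - (d j).val) := by
  have key : ∑ l, (((d - xvec m i j) l).val - (d l).val : ℤ) =
      (((d i - 1).val : ℤ) - (d i).val) + (((d j - 2).val : ℤ) - (d j).val) := by
    rw [Fintype.sum_eq_add i j hij fun l hl => by simp [xvec_apply_of_ne hl.1 hl.2]]
    simp [xvec_apply_left, xvec_apply_right hij]
  rw [sum_sub_distrib] at key
  simp only [weight]
  push_cast
  linarith

theorem weight_neg_of_forall_ne_two {d : Fin m → ZMod 3} (hd : ∀ l, d l ≠ 2) :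
    weight (-d) = 2 * weight d := by
  rw [weight, weight, mul_sum]
  refine sum_congr rfl fun l _ => ?_
  have : ∀ a : ZMod 3, a ≠ 2 → (-a).val = 2 * a.val := by decide
  exact this _ (hd l)

theorem weight_le (d : Fin m → ZMod 3) : weight d ≤ 2 * m := by
  calc weight d ≤ ∑ _l : Fin m, 2 := sum_le_sum fun l _ => Nat.le_of_lt_succ (d l).val_lt
    _ = 2 * m := by simp [mul_comm]

theorem weight_lt_of_ne_const_two {d : Fin m → ZMod 3} (hd : d ≠ fun _ => 2) :
    weight d < 2 * m := by
  obtain ⟨l, hl⟩ : ∃ l, d l ≠ 2 := by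
    by_contra! h
    exact hd (funext h)
  have hle : ∀ a : ZMod 3, a.val ≤ 2 := fun a => Nat.le_of_lt_succ a.val_lt
  have hlt : ∀ a : ZMod 3, a ≠ 2 → a.val < 2 := by decide
  calc weight d < ∑ _l : Fin m, 2 := sum_lt_sum (fun l _ => hle _) ⟨l, mem_univ _, hlt _ hl⟩
    _ = 2 * m := by simp [mul_comm]

theorem weight_const_two : weight (fun _ : Fin m => (2 : ZMod 3)) = 2 * m := by
  rw [weight, sum_const, card_univ, Fintype.card_fin, smul_eq_mul, mul_comm]
  rfl

def symmWeight (d : Fin m → ZMod 3) : ℕ := max (weight d) (weight (-d))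

theorem symmWeight_neg (d : Fin m → ZMod 3) : symmWeight (-d) = symmWeight d := by
  rw [symmWeight, symmWeight, neg_neg, max_comm]

theorem symmWeight_sub_xvec_of_eq_one_of_eq_two {d : Fin m → ZMod 3} (hi : d i = 1)
    (hj : d j = 2) (hij : i ≠ j) : symmWeight (d - xvec m i j) + 3 = symmWeight d := by
  have h₁ := weight_sub_xvec hij d
  have h₂ := weight_sub_xvec hij.symm (-d)
  rw [← neg_sub_xvec hij, Pi.neg_apply, Pi.neg_apply, hi, hj] at h₂
  rw [hi, hj] at h₁
  rw [show (((1 - 1 : ZMod 3).val : ℤ) - (1 : ZMod 3).val) = -1 by decide,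
    show (((2 - 2 : ZMod 3).val : ℤ) - (2 : ZMod 3).val) = -2 by decide] at h₁
  rw [show (((-2 - 1 : ZMod 3).val : ℤ) - (-2 : ZMod 3).val) = -1 by decide,
    show (((-1 - 2 : ZMod 3).val : ℤ) - (-1 : ZMod 3).val) = -2 by decide] at h₂
  simp only [symmWeight]
  omega

theorem symmWeight_sub_xvec_of_eq_one_of_eq_one {d : Fin m → ZMod 3} (hd : ∀ l, d l ≠ 2)
    (h3 : 3 ≤ weight d) (hi : d i = 1) (hj : d j = 1) (hij : i ≠ j) :
    symmWeight (d - xvec m i j) + 3 = symmWeight d := by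
  have h₁ := weight_sub_xvec hij d
  have h₂ := weight_sub_xvec hij.symm (-d)
  rw [← neg_sub_xvec hij, Pi.neg_apply, Pi.neg_apply, hi, hj] at h₂
  rw [hi, hj] at h₁
  rw [show (((1 - 1 : ZMod 3).val : ℤ) - (1 : ZMod 3).val) = -1 by decide,
    show (((1 - 2 : ZMod 3).val : ℤ) - (1 : ZMod 3).val) = 1 by decide] at h₁
  rw [show (((-1 - 1 : ZMod 3).val : ℤ) - (-1 : ZMod 3).val) = -1 by decide,
    show (((-1 - 2 : ZMod 3).val : ℤ) - (-1 : ZMod 3).val) = -2 by decide] at h₂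
  have := weight_neg_of_forall_ne_two hd
  simp only [symmWeight]
  omega

theorem exists_symmWeight_sub_xvec_add_three_le {d : Fin m → ZMod 3} (hd : d ≠ 0)
    (hsum : ∑ l, d l = 0) : ∃ i j, i ≠ j ∧ symmWeight (d - xvec m i j) + 3 ≤ symmWeight d := by
  by_cases hb : ∃ i j, d i = 1 ∧ d j = 2
  · obtain ⟨i, j, hi, hj⟩ := hb
    have hij : i ≠ j := fun h => absurd (h ▸ hi : d j = 1) (by rw [hj]; decide)
    exact ⟨i, j, hij, (symmWeight_sub_xvec_of_eq_one_of_eq_two hi hj hij).le⟩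
  -- `d ↦ -d` swaps the values `1` and `2` and preserves `symmWeight`
  wlog h1 : ∃ i, d i = 1 generalizing d
  · obtain ⟨i, hi⟩ : ∃ i, (-d) i = 1 := by
      obtain ⟨i, hi⟩ := Function.ne_iff.1 hd
      refine ⟨i, ?_⟩
      have : ∀ a : ZMod 3, a ≠ 0 → a ≠ 1 → -a = 1 := by decide
      exact this _ hi fun h => h1 ⟨i, h⟩
    have hb' : ¬∃ i j, (-d) i = 1 ∧ (-d) j = 2 := fun ⟨_, j, _, hj⟩ => h1 ⟨j, by
      rw [← neg_neg d, Pi.neg_apply, hj]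
      exact (by decide : (-2 : ZMod 3) = 1)⟩
    obtain ⟨j, i, hji, h⟩ := this (neg_ne_zero.2 hd) (by simp [hsum]) hb' ⟨i, hi⟩
    refine ⟨i, j, hji.symm, ?_⟩
    rwa [← neg_sub_xvec hji.symm, symmWeight_neg, symmWeight_neg] at h
  obtain ⟨i, hi⟩ := h1
  have hd2 : ∀ l, d l ≠ 2 := fun l hl => hb ⟨i, l, hi, hl⟩
  obtain ⟨j, hji, hj⟩ : ∃ j ∈ univ.erase i, d j ≠ 0 := by
    refine exists_ne_zero_of_sum_ne_zero ?_
    rw [← add_sum_erase _ _ (mem_univ i), hi] at hsum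
    rw [eq_neg_of_add_eq_zero_right hsum]
    decide
  have hj : d j = 1 := by
    have : ∀ a : ZMod 3, a ≠ 0 → a ≠ 2 → a = 1 := by decide
    exact this _ hj (hd2 j)
  have h3 : 3 ≤ weight d := by
    have hpos : (d i).val ≤ weight d :=
      single_le_sum (f := fun l => (d l).val) (fun l _ => Nat.zero_le _) (mem_univ i)
    rw [hi, ZMod.val_one] at hpos
    have := three_dvd_weight hsum
    omega
  exact ⟨i, j, (ne_of_mem_erase hji).symm,
    (symmWeight_sub_xvec_of_eq_one_of_eq_one hd2 h3 hi hj (ne_of_mem_erase hji).symm).le⟩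

theorem exists_adj_sub_xvec (u : GammaVert m) (hij : i ≠ j) :
    ∃ w : GammaVert m, (Gm m).Adj u w ∧ w.1 = u.1 - xvec m i j :=
  ⟨⟨u.1 - xvec m i j, by simp only [Pi.sub_apply, sum_sub_distrib, u.2, sum_xvec hij, sub_zero]⟩,
    ⟨i, j, hij, sub_sub_cancel _ _⟩, rfl⟩

theorem weight_sub_le_three_mul_length {u v : GammaVert m} (p : (Gm m).Walk u v) :
    weight (u.1 - v.1) ≤ 3 * p.length := by
  induction p with
  | nil => simp [weight]
  | @cons u w v h p ih =>
    rw [SimpleGraph.Walk.length_cons]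
    obtain ⟨i, j, hij, huw⟩ := h
    calc weight (u.1 - v.1) = weight ((u.1 - w.1) + (w.1 - v.1)) := by rw [sub_add_sub_cancel]
      _ ≤ 3 + weight (w.1 - v.1) := by grw [weight_add_le, huw, weight_xvec hij]
      _ ≤ 3 * (p.length + 1) := by omega

theorem exists_walk_three_mul_length_le (u v : GammaVert m) :
    ∃ p : (Gm m).Walk u v, 3 * p.length ≤ symmWeight (u.1 - v.1) := by
  induction h : symmWeight (u.1 - v.1) using Nat.strong_induction_on generalizing u with
  | _ k ih =>
  by_cases huv : u = v
  · subst huv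
    exact ⟨.nil, by simp⟩
  have hsum : ∑ l, (u.1 - v.1) l = 0 := by simp [sum_sub_distrib, u.2, v.2]
  obtain ⟨i, j, hij, hle⟩ := exists_symmWeight_sub_xvec_add_three_le
    (sub_ne_zero.2 fun h => huv (Subtype.ext h)) hsum
  obtain ⟨w, huw, hw⟩ := exists_adj_sub_xvec u hij
  have hwv : w.1 - v.1 = u.1 - v.1 - xvec m i j := by rw [hw]; abel
  obtain ⟨p, hp⟩ := ih _ (by rw [hwv]; omega) w rfl
  rw [hwv] at hp
  exact ⟨.cons huw p, by rw [SimpleGraph.Walk.length_cons]; omega⟩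

theorem reachable (u v : GammaVert m) : (Gm m).Reachable u v :=
  ⟨(exists_walk_three_mul_length_le u v).choose⟩

theorem three_mul_dist (u v : GammaVert m) : 3 * (Gm m).dist u v = symmWeight (u.1 - v.1) := by
  obtain ⟨p, hp⟩ := exists_walk_three_mul_length_le u v
  obtain ⟨q, hq⟩ := (reachable u v).exists_walk_length_eq_dist
  have h₁ := weight_sub_le_three_mul_length q
  have h₂ := weight_sub_le_three_mul_length q.reverse
  rw [SimpleGraph.Walk.length_reverse, ← neg_sub] at h₂
  have := SimpleGraph.dist_le p
  simp only [symmWeight] at hp ⊢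
  omega

theorem symmWeight_const {c : ZMod 3} (hc : c ≠ 0) :
    symmWeight (fun _ : Fin m => c) = 2 * m := by
  rcases (by decide : ∀ c : ZMod 3, c ≠ 0 → c = 2 ∨ -c = 2) c hc with h | h
  · rw [symmWeight, h, weight_const_two]
    exact max_eq_left (weight_le _)
  · rw [← symmWeight_neg, symmWeight,
      show (-fun _ : Fin m => c) = fun _ => 2 from funext fun _ => h, weight_const_two]
    exact max_eq_left (weight_le _)

instance : Fintype (GammaVert m) := inferInstanceAs (Fintype {z : Fin m → ZMod 3 // ∑ i, z i = 0})

def part [NeZero m] (u : GammaVert m) : Fin m → ZMod 3 := fun l => u.1 l - u.1 0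

theorem part_eq_part_iff [NeZero m] {u v : GammaVert m} :
    part u = part v ↔ ∃ c, u.1 - v.1 = fun _ => c := by
  simp only [part, funext_iff, Pi.sub_apply, sub_eq_sub_iff_sub_eq_sub]
  exact ⟨fun h => ⟨_, h⟩, fun ⟨c, h⟩ l => (h l).trans (h 0).symm⟩

variable {n : ℕ}

theorem power_adj_iff [NeZero n] {u v : GammaVert (3 * n)} :
    ((Gm (3 * n)).power (2 * n - 1)).Adj u v ↔ part u ≠ part v := by
  have hdist := three_mul_dist u v
  change u ≠ v ∧ _ ∧ _ ↔ _
  simp only [reachable u v, true_and]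
  constructor
  · rintro ⟨huv, hle⟩ hpart
    obtain ⟨c, hc⟩ := part_eq_part_iff.1 hpart
    have hc0 : c ≠ 0 := fun h => huv (Subtype.ext (sub_eq_zero.1 (hc.trans (funext fun _ => h))))
    rw [hc, symmWeight_const hc0] at hdist
    have := NeZero.ne n
    omega
  · intro hpart
    refine ⟨fun h => hpart (h ▸ rfl), ?_⟩
    have h₁ : u.1 - v.1 ≠ fun _ => 2 := fun h => hpart (part_eq_part_iff.2 ⟨2, h⟩)
    have h₂ : -(u.1 - v.1) ≠ fun _ => 2 := fun h => hpart (part_eq_part_iff.2 ⟨-2, by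
      rw [← neg_neg (u.1 - v.1), h]; rfl⟩)
    have := weight_lt_of_ne_const_two h₁
    have := weight_lt_of_ne_const_two h₂
    simp only [symmWeight] at hdist
    omega
theorem exists_part_eq_and_apply_zero_eq [NeZero n] (u : GammaVert (3 * n)) (s : ZMod 3) :
    ∃ v : GammaVert (3 * n), part v = part u ∧ v.1 0 = s := by
  have hsum : ∑ l, (u.1 l + (s - u.1 0)) = 0 := by
    rw [sum_add_distrib, u.2, sum_const, card_univ, Fintype.card_fin, nsmul_eq_mul,
      Nat.cast_mul, show ((3 : ℕ) : ZMod 3) = 0 from rfl, zero_mul, zero_mul, zero_add]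
  refine ⟨⟨_, hsum⟩, part_eq_part_iff.2 ⟨s - u.1 0, funext fun l => ?_⟩, add_sub_cancel _ _⟩
  simp

theorem one_lt_card_range_part [NeZero n] (hn : 2 ≤ n) :
    1 < Fintype.card (Set.range (part (m := 3 * n))) := by
  obtain ⟨i, j, hij⟩ : ∃ i j : Fin (3 * n), i ≠ j := Fintype.one_lt_card_iff.1 (by simp; omega)
  obtain ⟨w, huw, -⟩ := exists_adj_sub_xvec ⟨0, sum_const_zero⟩ hij
  have : ((Gm (3 * n)).power (2 * n - 1)).Adj ⟨0, sum_const_zero⟩ w :=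
    ⟨huw.ne, huw.reachable, by rw [SimpleGraph.dist_eq_one_iff_adj.2 huw]; omega⟩
  exact Fintype.one_lt_card_iff.2
    ⟨⟨_, _, rfl⟩, ⟨_, w, rfl⟩, fun h => power_adj_iff.1 this (congrArg Subtype.val h)⟩

theorem chromaticNumber_power_ne_listChromaticNumber (hn : 2 ≤ n) :
    ((Gm (3 * n)).power (2 * n - 1)).chromaticNumber ≠
      (((Gm (3 * n)).power (2 * n - 1)).listChromaticNumber : ℕ∞) := by
  have : NeZero n := ⟨by omega⟩
  set π := Set.rangeFactorization (part (m := 3 * n))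
  have hadj : ∀ u v, ((Gm (3 * n)).power (2 * n - 1)).Adj u v ↔ π u ≠ π v :=
    fun u v => power_adj_iff.trans (Set.rangeFactorization_eq_rangeFactorization_iff u v).not.symm
  have hσ : ∀ c s, ∃ v, π v = c ∧ v.1 0 = s := by
    rintro ⟨_, u, rfl⟩ s
    obtain ⟨v, hv, hvs⟩ := exists_part_eq_and_apply_zero_eq u s
    exact ⟨v, Subtype.ext hv, hvs⟩
  have hN := one_lt_card_range_part hn
  rw [SimpleGraph.chromaticNumber_eq_card_of_adj_iff Set.rangeFactorization_surjective hadj]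
  refine Nat.cast_injective.ne (SimpleGraph.listChromaticNumber_ne_of_not_choosable (by omega)
    (fun v => ?_) (SimpleGraph.not_choosable_of_adj _ hσ (fun u v => (hadj u v).2) hN)).symm
  rw [card_erase_of_mem (mem_range.2 (by have := (v.1 0).val_lt; omega)), card_range]
  rfl

end Gm

/-- For every `n ≥ 2`, `G_{3n}^(2n-1)` is not chromatic-choosable; consequently, for
every `k ≥ 2` there exists a graph `G` such that `G^(2k-1)` is not chromatic-choosable. -/
theorem odd_power_not_chromatic_choosable :
    (∀ n : ℕ, 2 ≤ n →
      ((Gm (3 * n)).power (2 * n - 1)).chromaticNumber ≠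
        (((Gm (3 * n)).power (2 * n - 1)).listChromaticNumber : ℕ∞)) ∧
    (∀ k : ℕ, 2 ≤ k →
      ∃ (V : Type) (_ : Fintype V) (G : SimpleGraph V),
        (G.power (2 * k - 1)).chromaticNumber ≠
          ((G.power (2 * k - 1)).listChromaticNumber : ℕ∞)) :=
  ⟨fun _ => Gm.chromaticNumber_power_ne_listChromaticNumber,
    fun k hk => ⟨GammaVert (3 * k), inferInstance, Gm (3 * k),
      Gm.chromaticNumber_power_ne_listChromaticNumber hk⟩⟩
end

section
/- Let n ≥ 2 be an integer and H_{3n} = G_{3n} □ K_3. For any two vertices x = (x_1, x_2) and y = (y_1, y_2) of H_{3n}, the distance satisfies d_{H_{3n}}(x, y) ≤ 2n + 1, and d_{H_{3n}}(x, y) = 2n + 1 if and only if d_{G_{3n}}(x_1, y_1) = 2n and x_2 ≠ y_2. -/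
open SimpleGraph

/-!
Distances in a box product add up, and `K_3` contributes `0` or `1`, so everything reduces to the
bound `3 d(u, v) ≤ 2 m` in `G_m`, by induction on the Hamming distance of `u` and `v`. If the
difference `u - v` has a coordinate `1` and a coordinate `2`, one edge clears both. Otherwise all
its nonzero coordinates are equal, so (the coordinate sum being `0`) there are a multiple of three
of them, and two edges clear three.
-/

open Finset

lemma SimpleGraph.dist_boxProd_of_reachable {α β : Type*} {G : SimpleGraph α} {H : SimpleGraph β}
    {x y : α × β} (hG : G.Reachable x.1 y.1) (hH : H.Reachable x.2 y.2) :
    (G □ H).dist x y = G.dist x.1 y.1 + H.dist x.2 y.2 := by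
  have hGH : (G □ H).Reachable x y := reachable_boxProd.2 ⟨hG, hH⟩
  have h := edist_boxProd (G := G) (H := H) x y
  rw [← hGH.coe_dist_eq_edist, ← hG.coe_dist_eq_edist, ← hH.coe_dist_eq_edist] at h
  exact_mod_cast h

theorem hammingDist_add_card_eq {ι β : Type*} [Fintype ι] [DecidableEq ι] [DecidableEq β]
    {a b c : ι → β} (S : Finset ι) (ha : ∀ l ∈ S, a l = c l) (hb : ∀ l ∈ S, b l ≠ c l)
    (hab : ∀ l ∉ S, a l = b l) :
    hammingDist a c + #S = hammingDist b c := by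
  have hsupp : univ.filter (fun l => b l ≠ c l) = univ.filter (fun l => a l ≠ c l) ∪ S := by
    ext l
    by_cases hl : l ∈ S <;> simp [hl, ha, hb, hab]
  rw [hammingDist, hammingDist, hsupp, card_union_of_disjoint]
  exact disjoint_left.2 fun l hl hlS => (mem_filter.1 hl).2 (ha l hlS)

theorem dvd_hammingDist_of_sum_eq_sum {ι : Type*} [Fintype ι] {p : ℕ} [Fact p.Prime]
    {x y : ι → ZMod p} (hsum : ∑ l, x l = ∑ l, y l) {a : ZMod p}
    (ha : ∀ l, x l ≠ y l → x l - y l = a) :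
    p ∣ hammingDist x y := by
  have h : (hammingDist x y : ZMod p) * a = 0 := by
    rw [← sub_eq_zero.2 hsum, ← sum_sub_distrib,
      ← sum_filter_of_ne (p := fun l => x l ≠ y l) fun l _ h => sub_ne_zero.1 h,
      hammingDist, ← nsmul_eq_mul, ← sum_const]
    exact sum_congr rfl fun l hl => (ha l (mem_filter.1 hl).2).symm
  rcases mul_eq_zero.1 h with h | rfl
  · exact (ZMod.natCast_eq_zero_iff _ _).1 h
  · rw [hammingDist_eq_zero.2 (funext fun l => by_contra fun hl => hl (sub_eq_zero.1 (ha l hl)))]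
    exact dvd_zero p

theorem forall_sub_eq_one_or_forall_sub_eq_one {ι : Type*} {x y : ι → ZMod 3}
    (h : ¬∃ i j, x i - y i = 1 ∧ x j - y j = 2) :
    (∀ l, x l ≠ y l → x l - y l = 1) ∨ (∀ l, y l ≠ x l → y l - x l = 1) := by
  have hval : ∀ a : ZMod 3, a ≠ 0 → a ≠ 1 → a = 2 := by decide
  by_cases hone : ∃ i, x i - y i = 1
  · obtain ⟨i, hi⟩ := hone
    exact .inl fun l hl => by_contra fun h1 => h ⟨i, l, hi, hval _ (sub_ne_zero.2 hl) h1⟩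
  · refine .inr fun l hl => ?_
    rw [← neg_sub, hval _ (sub_ne_zero.2 hl.symm) fun h1 => hone ⟨l, h1⟩]
    rfl

namespace GammaVert

variable {m : ℕ}

theorem sum_xvec {i j : Fin m} (hij : i ≠ j) : ∑ l, xvec m i j l = 0 := by
  have hx : xvec m i j = Pi.single i 1 + Pi.single j 2 := by
    ext l
    by_cases hi : l = i <;> by_cases hj : l = j <;> simp_all [xvec]
  rw [hx]
  simp only [Pi.add_apply, sum_add_distrib, Finset.sum_pi_single', mem_univ, if_true]
  decide

def subXvec (u : GammaVert m) {i j : Fin m} (hij : i ≠ j) : GammaVert m :=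
  ⟨u.1 - xvec m i j, by simp only [Pi.sub_apply, sum_sub_distrib, u.2, sum_xvec hij, sub_zero]⟩

theorem Gm_adj_subXvec (u : GammaVert m) {i j : Fin m} (hij : i ≠ j) :
    (Gm m).Adj u (u.subXvec hij) :=
  ⟨i, j, hij, sub_sub_cancel _ _⟩

theorem hammingDist_subXvec_add_two {u v : GammaVert m} {i j : Fin m} (hij : i ≠ j)
    (hi : u.1 i - v.1 i = 1) (hj : u.1 j - v.1 j = 2) :
    hammingDist (u.subXvec hij).1 v.1 + 2 = hammingDist u.1 v.1 := by
  rw [← card_pair hij]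
  refine hammingDist_add_card_eq _ ?_ ?_ ?_
  · simp only [mem_insert, mem_singleton, forall_eq_or_imp, forall_eq, subXvec, Pi.sub_apply,
      xvec, ↓reduceIte, if_neg hij.symm]
    exact ⟨by linear_combination hi, by linear_combination hj⟩
  · simp only [mem_insert, mem_singleton, forall_eq_or_imp, forall_eq]
    exact ⟨sub_ne_zero.1 (by rw [hi]; decide), sub_ne_zero.1 (by rw [hj]; decide)⟩
  · intro l hl
    simp only [mem_insert, mem_singleton, not_or] at hl
    simp [subXvec, xvec, hl.1, hl.2]

-- `x_{j,i} + x_{k,i}` is `1` at `j` and at `k`, and `2 + 2 = 1` at `i`.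
theorem hammingDist_subXvec_subXvec_add_three {u v : GammaVert m} {i j k : Fin m}
    (hij : i ≠ j) (hik : i ≠ k) (hjk : j ≠ k)
    (hi : u.1 i - v.1 i = 1) (hj : u.1 j - v.1 j = 1) (hk : u.1 k - v.1 k = 1) :
    hammingDist ((u.subXvec hij.symm).subXvec hik.symm).1 v.1 + 3 = hammingDist u.1 v.1 := by
  have hS : #{i, j, k} = 3 := card_eq_three.2 ⟨i, j, k, hij, hik, hjk, rfl⟩
  have key := hammingDist_add_card_eq (a := ((u.subXvec hij.symm).subXvec hik.symm).1)
    (b := u.1) (c := v.1) {i, j, k} ?_ ?_ ?_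
  · rwa [hS] at key
  · simp only [mem_insert, mem_singleton, forall_eq_or_imp, forall_eq, subXvec,
      Pi.sub_apply, xvec, ↓reduceIte, if_neg hij, if_neg hik, if_neg hjk, if_neg hij.symm,
      if_neg hik.symm, if_neg hjk.symm]
    have h3 : (3 : ZMod 3) = 0 := rfl
    exact ⟨by linear_combination hi - h3, by linear_combination hj, by linear_combination hk⟩
  · simp only [mem_insert, mem_singleton, forall_eq_or_imp, forall_eq]
    exact ⟨sub_ne_zero.1 (by rw [hi]; decide), sub_ne_zero.1 (by rw [hj]; decide),
      sub_ne_zero.1 (by rw [hk]; decide)⟩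
  · intro l hl
    simp only [mem_insert, mem_singleton, not_or] at hl
    simp [subXvec, xvec, hl.1, hl.2.1, hl.2.2]

theorem exists_walk_length_two_hammingDist_add_three {u v : GammaVert m} (hne : u ≠ v)
    (h : ∀ l, u.1 l ≠ v.1 l → u.1 l - v.1 l = 1) :
    ∃ (w : GammaVert m) (p : (Gm m).Walk u w), p.length = 2 ∧
      hammingDist w.1 v.1 + 3 = hammingDist u.1 v.1 := by
  have hdvd : 3 ∣ hammingDist u.1 v.1 := dvd_hammingDist_of_sum_eq_sum (u.2.trans v.2.symm) h
  have hpos : 0 < hammingDist u.1 v.1 := hammingDist_pos.2 (Subtype.coe_injective.ne hne)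
  obtain ⟨i, hi, j, hj, k, hk, hij, hik, hjk⟩ :=
    two_lt_card.1 (show 2 < #{l | u.1 l ≠ v.1 l} by unfold hammingDist at *; omega)
  have hd : ∀ l ∈ ({l | u.1 l ≠ v.1 l} : Finset (Fin m)), u.1 l - v.1 l = 1 :=
    fun l hl => h l (mem_filter.1 hl).2
  exact ⟨_, .cons (Gm_adj_subXvec u _) (.cons (Gm_adj_subXvec _ _) .nil), rfl,
    hammingDist_subXvec_subXvec_add_three hij hik hjk (hd i hi) (hd j hj) (hd k hk)⟩

theorem exists_walk_three_mul_length_le (u v : GammaVert m) :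
    ∃ p : (Gm m).Walk u v, 3 * p.length ≤ 2 * hammingDist u.1 v.1 := by
  induction hN : hammingDist u.1 v.1 using Nat.strong_induction_on generalizing u v with
  | _ N ih =>
  subst hN
  by_cases huv : u = v
  · subst huv
    exact ⟨.nil, by simp⟩
  by_cases hmixed : ∃ i j, u.1 i - v.1 i = 1 ∧ u.1 j - v.1 j = 2
  · obtain ⟨i, j, hi, hj⟩ := hmixed
    have hij : i ≠ j := by
      rintro rfl
      exact absurd (hi.symm.trans hj) (by decide)
    have hstep := hammingDist_subXvec_add_two hij hi hj
    obtain ⟨p, hp⟩ := ih _ (by omega) (u.subXvec hij) v rfl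
    exact ⟨.cons (Gm_adj_subXvec u hij) p, by rw [Walk.length_cons]; omega⟩
  rcases forall_sub_eq_one_or_forall_sub_eq_one hmixed with h | h
  · obtain ⟨w, q, hq, hw⟩ := exists_walk_length_two_hammingDist_add_three huv h
    obtain ⟨p, hp⟩ := ih _ (by omega) w v rfl
    exact ⟨q.append p, by rw [Walk.length_append]; omega⟩
  · obtain ⟨w, q, hq, hw⟩ := exists_walk_length_two_hammingDist_add_three (Ne.symm huv) h
    rw [hammingDist_comm v.1, hammingDist_comm w.1] at hw
    obtain ⟨p, hp⟩ := ih _ (by omega) u w rfl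
    exact ⟨p.append q.reverse, by rw [Walk.length_append, Walk.length_reverse]; omega⟩

end GammaVert

theorem Gm_reachable {m : ℕ} (u v : GammaVert m) : (Gm m).Reachable u v :=
  (GammaVert.exists_walk_three_mul_length_le u v).elim fun p _ => ⟨p⟩

theorem three_mul_dist_Gm_le {m : ℕ} (u v : GammaVert m) : 3 * (Gm m).dist u v ≤ 2 * m := by
  obtain ⟨p, hp⟩ := GammaVert.exists_walk_three_mul_length_le u v
  have hH : hammingDist u.1 v.1 ≤ m := (hammingDist_le_card_fintype).trans_eq (Fintype.card_fin m)
  have := dist_le p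
  omega

theorem dist_boxProd_general (n : ℕ) (x y : GammaVert (3 * n) × Fin 3) :
    ((Gm (3 * n)).boxProd (⊤ : SimpleGraph (Fin 3))).dist x y ≤ 2 * n + 1 ∧
    (((Gm (3 * n)).boxProd (⊤ : SimpleGraph (Fin 3))).dist x y = 2 * n + 1 ↔
      ((Gm (3 * n)).dist x.1 y.1 = 2 * n ∧ x.2 ≠ y.2)) := by
  have hG := three_mul_dist_Gm_le x.1 y.1
  rw [dist_boxProd_of_reachable (Gm_reachable x.1 y.1) (connected_top.preconnected x.2 y.2),
    dist_top]
  split_ifs with h <;> simp [h] <;> omega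

/-- Let `n ≥ 2` and `H_{3n} = G_{3n} □ K_3`. For any two vertices `x = (x₁, x₂)` and
`y = (y₁, y₂)` of `H_{3n}`, `d(x,y) ≤ 2n + 1`, and `d(x,y) = 2n + 1` iff
`d_{G_{3n}}(x₁, y₁) = 2n` and `x₂ ≠ y₂`. -/
theorem dist_boxProd (n : ℕ) (hn : 2 ≤ n) (x y : GammaVert (3 * n) × Fin 3) :
    ((Gm (3 * n)).boxProd (⊤ : SimpleGraph (Fin 3))).dist x y ≤ 2 * n + 1 ∧
    (((Gm (3 * n)).boxProd (⊤ : SimpleGraph (Fin 3))).dist x y = 2 * n + 1 ↔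
      ((Gm (3 * n)).dist x.1 y.1 = 2 * n ∧ x.2 ≠ y.2)) :=
  dist_boxProd_general n x y
end
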